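/- Let ℓ ≥ 1, γ ∈ (0,1), ε ≥ 0, z ∈ {0,1}^ℓ, and let p, q be as in the LP instance. Then Σ_{y∈Y} min{ e^{ε}(1−γ)·q_y/p_y , 1 }·p_y ≥ 1 − γ. -/

import Mathlib

open scoped Classical

noncomputable section

/-- Feasibility for the credit-retrofitting linear program: `r : Y → [0,1]` and, with
`R = Σ_y r_y p_y`, for every `y` we have `e^{-ε} q_y R ≤ r_y p_y ≤ e^{ε} q_y R`. -/
def lpFeasible {Y : Type*} [Fintype Y] (ε : ℝ) (p q r : Y → ℝ) : Prop :=
  (∀ y, r y ∈ Set.Icc (0 : ℝ) 1) ∧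
  ∀ y, Real.exp (-ε) * q y * (∑ y', r y' * p y') ≤ r y * p y ∧
       r y * p y ≤ Real.exp ε * q y * (∑ y', r y' * p y')

/-- The counterfactual distribution `q` of the LP instance: uniform on `{0,1}^{ℓ+1}`. -/
def lpQ (ℓ : ℕ) : (Fin (ℓ + 1) → Bool) → ℝ := fun _ => (1 / 2) ^ (ℓ + 1)

/-- The distribution `p` of the LP instance: uniform except on `z∥0` and `z∥1`. -/
def lpP (ℓ : ℕ) (γ ε : ℝ) (z : Fin ℓ → Bool) : (Fin (ℓ + 1) → Bool) → ℝ := fun y =>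
  if y = Fin.snoc z false then (1 / 2) ^ (ℓ + 1) * (Real.exp (-ε) * (1 - γ))
  else if y = Fin.snoc z true then (1 / 2) ^ (ℓ + 1) * (2 - Real.exp (-ε) * (1 - γ))
  else (1 / 2) ^ (ℓ + 1)

/-! Since `p_y > 0`, each summand is `min (a q_y) p_y` with `a = e^ε (1 - γ)`. As `p = q` off
`{z∥0, z∥1}`, the sum is `min a 1 (1 - 2u) + u s + u min a (2 - s)` with `s = e^{-ε} (1 - γ)` and
`u = 2^{-(ℓ+1)} ≤ 1/2`. The bound `1 - γ` then follows from `a + s ≥ 2 (1 - γ)`, which is AM-GM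
for `a s = (1 - γ)²`. -/

open Real

theorem min_mul_div_mul_of_pos {α : Type*} [Field α] [LinearOrder α] [IsStrictOrderedRing α]
    (c q : α) {p : α} (hp : 0 < p) : min (c * (q / p)) 1 * p = min (c * q) p := by
  rw [min_mul_of_nonneg _ _ hp.le, one_mul, mul_div_assoc', div_mul_cancel₀ _ hp.ne']

theorem Fintype.sum_eq_sum_add_add_of_eq_off_pair {Y M : Type*} [Fintype Y] [AddCommGroup M]
    {f g : Y → M} {y₀ y₁ : Y} (hne : y₀ ≠ y₁) (hfg : ∀ y, y ≠ y₀ → y ≠ y₁ → f y = g y) :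
    ∑ y, f y = ∑ y, g y + (f y₀ - g y₀) + (f y₁ - g y₁) := by
  have hdiff : ∑ y, (f y - g y) = (f y₀ - g y₀) + (f y₁ - g y₁) :=
    Fintype.sum_eq_add y₀ y₁ hne fun y hy => sub_eq_zero.2 (hfg y hy.1 hy.2)
  rw [Finset.sum_sub_distrib, sub_eq_iff_eq_add'] at hdiff
  rw [hdiff, add_assoc]

theorem exp_neg_mul_le_exp_mul {ε c : ℝ} (hε : 0 ≤ ε) (hc : 0 ≤ c) :
    exp (-ε) * c ≤ exp ε * c :=
  mul_le_mul_of_nonneg_right (exp_le_exp.2 (by linarith)) hc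

theorem exp_neg_mul_lt_one {ε c : ℝ} (hε : 0 ≤ ε) (hc : c < 1) : exp (-ε) * c < 1 := by
  nlinarith [exp_le_one_iff.2 (neg_nonpos.2 hε), exp_pos (-ε)]

/-- With `t = e^ε`, `c = 1 - γ` and `u = 2^{-(ℓ+1)}` the right-hand side is the objective of the
LP instance, as computed in `sum_min_lpQ_lpP`. -/
theorem le_lpObjective {t c u : ℝ} (ht : 1 ≤ t) (hc0 : 0 ≤ c) (hc1 : c ≤ 1) (hu0 : 0 ≤ u)
    (hu : u ≤ 1 / 2) :
    c ≤ min (t * c) 1 * (1 - 2 * u) + u * (t⁻¹ * c) + u * min (t * c) (2 - t⁻¹ * c) := by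
  have ht0 : 0 < t := by linarith
  have hs : t⁻¹ * c ≤ c := mul_le_of_le_one_left hc0 (inv_le_one_of_one_le₀ ht)
  -- `t c + c / t - 2 c = c (t - 1)² / t`
  have hsum : 2 * c ≤ t * c + t⁻¹ * c := by
    have : 0 ≤ t⁻¹ * c * (t - 1) ^ 2 := by positivity
    have htt : t⁻¹ * t = 1 := inv_mul_cancel₀ ht0.ne'
    nlinarith
  rcases le_total (t * c) 1 with ha | ha
  · rw [min_eq_left ha, min_eq_left (by linarith)]
    -- the difference is `c (t - 1) (1 - u (1 + 1 / t))`
    have : 0 ≤ u * (t * c + t⁻¹ * c - 2 * c) := by nlinarith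
    nlinarith [mul_le_mul_of_nonneg_left ht hc0]
  · rw [min_eq_right ha]
    rcases le_total (t * c) (2 - t⁻¹ * c) with hm | hm
    · rw [min_eq_left hm]; nlinarith
    · rw [min_eq_right hm]; nlinarith

section LPInstance

variable (ℓ : ℕ) (γ ε : ℝ) (z : Fin ℓ → Bool)

theorem sum_lpQ : ∑ y, lpQ ℓ y = 1 := by
  simp only [lpQ, Finset.sum_const, Finset.card_univ, Fintype.card_fun, Fintype.card_bool,
    Fintype.card_fin, nsmul_eq_mul, Nat.cast_pow, Nat.cast_ofNat, ← mul_pow]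
  norm_num

theorem lpP_snoc_false :
    lpP ℓ γ ε z (Fin.snoc z false) = (1 / 2) ^ (ℓ + 1) * (exp (-ε) * (1 - γ)) :=
  if_pos rfl

theorem lpP_snoc_true :
    lpP ℓ γ ε z (Fin.snoc z true) = (1 / 2) ^ (ℓ + 1) * (2 - exp (-ε) * (1 - γ)) := by
  simp [lpP, Fin.snoc_inj]

theorem lpP_of_ne {y : Fin (ℓ + 1) → Bool} (h₀ : y ≠ Fin.snoc z false)
    (h₁ : y ≠ Fin.snoc z true) : lpP ℓ γ ε z y = lpQ ℓ y := by
  simp [lpP, lpQ, h₀, h₁]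

variable {γ ε}

theorem lpP_pos (hγ0 : 0 < γ) (hγ1 : γ < 1) (hε : 0 ≤ ε) (y : Fin (ℓ + 1) → Bool) :
    0 < lpP ℓ γ ε z y := by
  have hs0 : 0 < exp (-ε) * (1 - γ) := mul_pos (exp_pos _) (by linarith)
  have hs2 : 0 < 2 - exp (-ε) * (1 - γ) := by
    linarith [exp_neg_mul_lt_one hε (by linarith : 1 - γ < 1)]
  unfold lpP
  split_ifs <;> positivity

theorem sum_min_lpQ_lpP (hγ1 : γ < 1) (hε : 0 ≤ ε) :
    ∑ y, min (exp ε * (1 - γ) * lpQ ℓ y) (lpP ℓ γ ε z y) =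
      min (exp ε * (1 - γ)) 1 * (1 - 2 * (1 / 2) ^ (ℓ + 1)) +
        (1 / 2) ^ (ℓ + 1) * (exp (-ε) * (1 - γ)) +
        (1 / 2) ^ (ℓ + 1) * min (exp ε * (1 - γ)) (2 - exp (-ε) * (1 - γ)) := by
  set a := exp ε * (1 - γ)
  set s := exp (-ε) * (1 - γ)
  set u : ℝ := (1 / 2) ^ (ℓ + 1)
  have hne : (Fin.snoc z false : Fin (ℓ + 1) → Bool) ≠ Fin.snoc z true := by
    simp [Fin.snoc_inj]
  have hq : ∀ y, lpQ ℓ y = u := fun _ => rfl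
  have hu : 0 ≤ u := by positivity
  have hsa : u * s ≤ a * u := by
    nlinarith [exp_neg_mul_le_exp_mul hε (by linarith : 0 ≤ 1 - γ)]
  rw [Fintype.sum_eq_sum_add_add_of_eq_off_pair (g := fun y => min a 1 * lpQ ℓ y) hne
    fun y h₀ h₁ => by rw [lpP_of_ne ℓ γ ε z h₀ h₁, min_mul_of_nonneg _ _ (hq y ▸ hu), one_mul],
    ← Finset.mul_sum, sum_lpQ, lpP_snoc_false, lpP_snoc_true, hq, hq,
    min_eq_right hsa, mul_comm a u, ← mul_min_of_nonneg _ _ hu]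
  ring

end LPInstance

theorem stmt12_general (ℓ : ℕ) (γ ε : ℝ) (hγ0 : 0 < γ) (hγ1 : γ < 1) (hε : 0 ≤ ε)
    (z : Fin ℓ → Bool) :
    1 - γ ≤ ∑ y, min (Real.exp ε * (1 - γ) * (lpQ ℓ y / lpP ℓ γ ε z y)) 1 *
      lpP ℓ γ ε z y := by
  simp_rw [min_mul_div_mul_of_pos _ _ (lpP_pos ℓ z hγ0 hγ1 hε _)]
  rw [sum_min_lpQ_lpP ℓ z hγ1 hε, exp_neg]
  exact le_lpObjective (one_le_exp hε) (by linarith) (by linarith) (by positivity)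
    (pow_le_of_le_one (by norm_num) (by norm_num) (by omega))

/-- For the LP instance given by `lpP` and `lpQ`:
`Σ_y min{ e^ε (1-γ) q_y / p_y , 1 } · p_y ≥ 1 - γ`. -/
theorem stmt12 (ℓ : ℕ) (hℓ : 1 ≤ ℓ) (γ ε : ℝ) (hγ0 : 0 < γ) (hγ1 : γ < 1) (hε : 0 ≤ ε)
    (z : Fin ℓ → Bool) :
    1 - γ ≤ ∑ y, min (Real.exp ε * (1 - γ) * (lpQ ℓ y / lpP ℓ γ ε z y)) 1 *
      lpP ℓ γ ε z y :=
  stmt12_general ℓ γ ε hγ0 hγ1 hε z
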